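/- For a matrix A with restricted isometry constant δ_T and any index set 𝒯 with |𝒯| ≤ T such that A_𝒯 has full column rank, for all vectors y one has ‖A_𝒯† y‖ ≤ (1/√(1−δ_T)) ‖y‖, where A_𝒯† = (A_𝒯* A_𝒯)^{-1} A_𝒯*. -/

import Mathlib

open Matrix Finset

/-- Euclidean (ℓ2) norm of a finitely-indexed real vector. -/
noncomputable def enorm2 {ι : Type*} [Fintype ι] (x : ι → ℝ) : ℝ :=
  Real.sqrt (∑ i, x i ^ 2)

/-- `x` is `T`-sparse: it has at most `T` nonzero entries. -/
def sparse {N : ℕ} (T : ℕ) (x : Fin N → ℝ) : Prop :=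
  (Finset.univ.filter (fun i => x i ≠ 0)).card ≤ T

/-- Support of a vector as a finset. -/
noncomputable def fsupp {N : ℕ} (x : Fin N → ℝ) : Finset (Fin N) :=
  Finset.univ.filter (fun i => x i ≠ 0)

/-- Restricted isometry property with constant `δ` at sparsity level `T`. -/
def RIP {M N : ℕ} (A : Matrix (Fin M) (Fin N) ℝ) (T : ℕ) (δ : ℝ) : Prop :=
  ∀ x : Fin N → ℝ, sparse T x →
    (1 - δ) * enorm2 x ^ 2 ≤ enorm2 (A.mulVec x) ^ 2 ∧
    enorm2 (A.mulVec x) ^ 2 ≤ (1 + δ) * enorm2 x ^ 2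

/-- Column submatrix of `A` indexed by the finset `𝒯`. -/
def cols {M N : ℕ} (A : Matrix (Fin M) (Fin N) ℝ) (𝒯 : Finset (Fin N)) :
    Matrix (Fin M) 𝒯 ℝ := A.submatrix id (fun i => (i : Fin N))

/-- Pseudo-inverse `(Bᵀ B)⁻¹ Bᵀ` (full column rank assumed where used). -/
noncomputable def pinv {M : ℕ} {ι : Type*} [Fintype ι] [DecidableEq ι]
    (B : Matrix (Fin M) ι ℝ) : Matrix ι (Fin M) ℝ := (Bᵀ * B)⁻¹ * Bᵀ

/-- `x` restricted to the index set `S` (zero off `S`). -/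
def restr {N : ℕ} (x : Fin N → ℝ) (S : Finset (Fin N)) : Fin N → ℝ :=
  fun i => if i ∈ S then x i else 0

/-- Zero-pad a vector indexed by `S` to a full-length vector. -/
noncomputable def scatter {N : ℕ} (S : Finset (Fin N)) (v : S → ℝ) : Fin N → ℝ :=
  fun i => if h : i ∈ S then v ⟨i, h⟩ else 0

/-!
Write `B = A_𝒯` and `z = B† y`. The normal equations `Bᵀ B z = Bᵀ y` give
`‖B z‖² = ⟨B z, y⟩ ≤ ‖B z‖ ‖y‖`, so `‖B z‖ ≤ ‖y‖` (`B B†` is an orthogonal projection).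
Zero-padding `z` to a `|𝒯|`-sparse vector `x` with `A x = B z`, the lower RIP bound gives
`(1 - δ) ‖z‖² ≤ ‖B z‖² ≤ ‖y‖²`.
-/

section Enorm2

variable {ι : Type*} [Fintype ι]

theorem enorm2_nonneg (x : ι → ℝ) : 0 ≤ enorm2 x := Real.sqrt_nonneg _

theorem enorm2_sq (x : ι → ℝ) : enorm2 x ^ 2 = x ⬝ᵥ x := by
  rw [enorm2, Real.sq_sqrt (by positivity)]
  simp only [dotProduct, sq]

theorem dotProduct_le_enorm2_mul_enorm2 (x y : ι → ℝ) : x ⬝ᵥ y ≤ enorm2 x * enorm2 y :=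
  Real.sum_mul_le_sqrt_mul_sqrt _ x y

theorem enorm2_le_of_dotProduct_self_eq {u y : ι → ℝ} (h : u ⬝ᵥ u = u ⬝ᵥ y) :
    enorm2 u ≤ enorm2 y := by
  have hu := enorm2_nonneg u
  have hy := enorm2_nonneg y
  have : enorm2 u ^ 2 ≤ enorm2 u * enorm2 y := by
    rw [enorm2_sq, h]
    exact dotProduct_le_enorm2_mul_enorm2 u y
  nlinarith

end Enorm2

section Pinv

variable {M : ℕ} {ι : Type*} [Fintype ι] [DecidableEq ι] (B : Matrix (Fin M) ι ℝ)

theorem transpose_mulVec_mulVec_pinv (hB : IsUnit (Bᵀ * B).det) (y : Fin M → ℝ) :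
    Bᵀ *ᵥ (B *ᵥ (pinv B *ᵥ y)) = Bᵀ *ᵥ y := by
  rw [pinv, mulVec_mulVec, mulVec_mulVec, ← Matrix.mul_assoc, mul_nonsing_inv _ hB,
    Matrix.one_mul]

theorem enorm2_mulVec_pinv_mulVec_le (hB : IsUnit (Bᵀ * B).det) (y : Fin M → ℝ) :
    enorm2 (B *ᵥ (pinv B *ᵥ y)) ≤ enorm2 y := by
  apply enorm2_le_of_dotProduct_self_eq
  set z := pinv B *ᵥ y
  calc (B *ᵥ z) ⬝ᵥ (B *ᵥ z) = (Bᵀ *ᵥ (B *ᵥ z)) ⬝ᵥ z := by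
        rw [dotProduct_mulVec, mulVec_transpose]
    _ = (Bᵀ *ᵥ y) ⬝ᵥ z := by rw [transpose_mulVec_mulVec_pinv B hB]
    _ = (B *ᵥ z) ⬝ᵥ y := by rw [mulVec_transpose, ← dotProduct_mulVec, dotProduct_comm]

end Pinv

section Scatter

variable {N : ℕ} (S : Finset (Fin N)) (v : S → ℝ)

theorem sum_scatter (f : Fin N → ℝ → ℝ) (hf : ∀ i, f i 0 = 0) :
    ∑ i, f i (scatter S v i) = ∑ s : S, f s (v s) := by
  rw [← Finset.sum_subset (subset_univ S) fun i _ hi => by simp [scatter, hi, hf],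
    ← Finset.sum_coe_sort S]
  refine Finset.sum_congr rfl fun s _ => ?_
  simp [scatter, s.2]

theorem sparse_scatter {T : ℕ} (hS : S.card ≤ T) : sparse T (scatter S v) := by
  refine le_trans (Finset.card_le_card fun i hi => ?_) hS
  by_contra h
  simp [scatter, h] at hi

theorem mulVec_scatter {M : ℕ} (A : Matrix (Fin M) (Fin N) ℝ) :
    A *ᵥ scatter S v = cols A S *ᵥ v := by
  funext m
  exact sum_scatter S v (fun i t => A m i * t) fun i => mul_zero _

theorem enorm2_scatter : enorm2 (scatter S v) = enorm2 v := by
  rw [enorm2, enorm2, sum_scatter S v (fun _ t => t ^ 2) fun _ => zero_pow two_ne_zero]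

end Scatter

theorem RIP.lower_cols {M N T : ℕ} {A : Matrix (Fin M) (Fin N) ℝ} {δ : ℝ} (hRIP : RIP A T δ)
    {S : Finset (Fin N)} (hS : S.card ≤ T) (v : S → ℝ) :
    (1 - δ) * enorm2 v ^ 2 ≤ enorm2 (cols A S *ᵥ v) ^ 2 := by
  simpa only [mulVec_scatter, enorm2_scatter] using (hRIP _ (sparse_scatter S v hS)).1

theorem le_one_div_sqrt_mul_of_mul_sq_le {a b c : ℝ} (hc : 0 < c) (ha : 0 ≤ a) (hb : 0 ≤ b)
    (h : c * a ^ 2 ≤ b ^ 2) : a ≤ 1 / √c * b := by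
  rw [one_div_mul_eq_div, le_div_iff₀ (Real.sqrt_pos.2 hc)]
  refine (pow_le_pow_iff_left₀ (by positivity) hb two_ne_zero).1 ?_
  rwa [mul_pow, Real.sq_sqrt hc.le, mul_comm]

theorem stmt0_general {M N T : ℕ} (A : Matrix (Fin M) (Fin N) ℝ) (δ : ℝ)
    (hδ1 : δ < 1) (hRIP : RIP A T δ)
    (𝒯 : Finset (Fin N)) (hcard : 𝒯.card ≤ T)
    (hrank : IsUnit ((cols A 𝒯)ᵀ * cols A 𝒯).det) :
    ∀ y : Fin M → ℝ,
      enorm2 ((pinv (cols A 𝒯)).mulVec y) ≤ (1 / Real.sqrt (1 - δ)) * enorm2 y := by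
  intro y
  set B := cols A 𝒯
  refine le_one_div_sqrt_mul_of_mul_sq_le (sub_pos.2 hδ1) (enorm2_nonneg _) (enorm2_nonneg _) ?_
  calc (1 - δ) * enorm2 (pinv B *ᵥ y) ^ 2 ≤ enorm2 (B *ᵥ (pinv B *ᵥ y)) ^ 2 :=
        hRIP.lower_cols hcard _
    _ ≤ enorm2 y ^ 2 :=
        pow_le_pow_left₀ (enorm2_nonneg _) (enorm2_mulVec_pinv_mulVec_le B hrank y) 2

theorem stmt0 {M N T : ℕ} (A : Matrix (Fin M) (Fin N) ℝ) (δ : ℝ)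
    (hδ0 : 0 ≤ δ) (hδ1 : δ < 1) (hRIP : RIP A T δ)
    (𝒯 : Finset (Fin N)) (hcard : 𝒯.card ≤ T)
    (hrank : IsUnit ((cols A 𝒯)ᵀ * cols A 𝒯).det) :
    ∀ y : Fin M → ℝ,
      enorm2 ((pinv (cols A 𝒯)).mulVec y) ≤ (1 / Real.sqrt (1 - δ)) * enorm2 y :=
  stmt0_general A δ hδ1 hRIP 𝒯 hcard hrank
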